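/- arXiv:2605.08487 — 2 statements merged into one kernel-verified Lean document; each statement's English description precedes it below -/
import Mathlib

section
/- Let n = 0 and m < 0 be integers, and suppose g is holomorphic near 0 with g(0) ≠ 0 and g' vanishing to order r ≥ 0 at 0, and dh = z^m H̃(z)dz with H̃(0) ≠ 0. Then the Hopf differential Q = -(1/2)(g'/g)·z^m H̃(z) dz² has order m + r at 0, the Jorge–Meeks multiplicity is ν = -m - 1, and the identity ν = r - ord₀(Q) - 1 holds. -/
/-!
Since `g 0 ≠ 0`, the logarithmic derivative `g'/g` has the order `r` of `g'` at `0`, and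
`z ^ m * H̃` has order `m`. Orders of meromorphic functions add under multiplication, so the
Hopf coefficient has order `m + r`; an integer order is exactly a factorization `z ^ (m + r) * K`
with `K` analytic and nonvanishing.
-/

open Filter Topology

section
variable {𝕜 : Type*} [NontriviallyNormedField 𝕜] {x : 𝕜}

theorem meromorphicOrderAt_sub_zpow_mul (m : ℤ) {H : 𝕜 → 𝕜} (hH : AnalyticAt 𝕜 H x)
    (hHx : H x ≠ 0) : meromorphicOrderAt (fun z => (z - x) ^ m * H z) x = m :=
  (meromorphicOrderAt_eq_int_iff (by fun_prop)).2 ⟨H, hH, hHx, .of_forall fun _ => rfl⟩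

theorem meromorphicOrderAt_logDeriv [CompleteSpace 𝕜] {g G : 𝕜 → 𝕜} {r : ℕ}
    (hg : AnalyticAt 𝕜 g x) (hgx : g x ≠ 0) (hG : AnalyticAt 𝕜 G x) (hGx : G x ≠ 0)
    (hgd : ∀ᶠ z in 𝓝 x, deriv g z = (z - x) ^ r * G z) :
    meromorphicOrderAt (logDeriv g) x = (r : ℤ) := by
  have hderiv : meromorphicOrderAt (deriv g) x = (r : ℤ) := by
    rw [meromorphicOrderAt_congr (nhdsWithin_le_nhds hgd)]
    simpa only [zpow_natCast] using meromorphicOrderAt_sub_zpow_mul r hG hGx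
  rw [logDeriv, meromorphicOrderAt_div hg.deriv.meromorphicAt hg.meromorphicAt, hderiv,
    hg.meromorphicNFAt.meromorphicOrderAt_eq_zero_iff.2 hgx, sub_zero]

end

theorem hopf_order_case_n_zero_general
    (g G H' : ℂ → ℂ) (r : ℕ) (m : ℤ)
    (hg : AnalyticAt ℂ g 0) (hg0 : g 0 ≠ 0)
    (hG : AnalyticAt ℂ G 0) (hG0 : G 0 ≠ 0)
    (hgd : ∀ᶠ z in 𝓝 (0 : ℂ), deriv g z = z ^ r * G z)
    (hH : AnalyticAt ℂ H' 0) (hH0 : H' 0 ≠ 0) :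
    (∃ K : ℂ → ℂ, AnalyticAt ℂ K 0 ∧ K 0 ≠ 0 ∧
        ∀ᶠ z in 𝓝[≠] (0 : ℂ),
          -(1 / 2) * (deriv g z / g z) * (z ^ m * H' z) = z ^ (m + (r : ℤ)) * K z) ∧
      (-m - 1 : ℤ) = (r : ℤ) - (m + (r : ℤ)) - 1 := by
  refine ⟨?_, by ring⟩
  have hlog : meromorphicOrderAt (fun z => deriv g z / g z) 0 = (r : ℤ) :=
    meromorphicOrderAt_logDeriv hg hg0 hG hG0 (by simpa only [sub_zero] using hgd)
  have hdh : meromorphicOrderAt (fun z => z ^ m * H' z) 0 = m := by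
    simpa only [sub_zero] using meromorphicOrderAt_sub_zpow_mul m hH hH0
  have hhalf : meromorphicOrderAt (fun _ : ℂ => -(1 / 2 : ℂ)) 0 = 0 :=
    analyticAt_const.meromorphicNFAt.meromorphicOrderAt_eq_zero_iff.2 (by norm_num)
  have hQ : meromorphicOrderAt
      (fun z => -(1 / 2) * (deriv g z / g z) * (z ^ m * H' z)) 0 = ↑(m + r) := by
    rw [fun_meromorphicOrderAt_mul (f := fun z => -(1 / 2) * (deriv g z / g z))
        (by fun_prop) (by fun_prop),
      fun_meromorphicOrderAt_mul (f := fun _ => -(1 / 2 : ℂ)) (g := fun z => deriv g z / g z)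
        (by fun_prop) (hg.deriv.meromorphicAt.div hg.meromorphicAt), hhalf, hlog, hdh]
    push_cast
    rw [zero_add, add_comm]
  obtain ⟨K, hK, hK0, hQK⟩ := (meromorphicOrderAt_eq_int_iff (by fun_prop)).1 hQ
  exact ⟨K, hK, hK0, by simpa only [sub_zero, smul_eq_mul] using hQK⟩

/-- Case `n = 0`, `m < 0`: if `g` is holomorphic near `0` with `g 0 ≠ 0` and
`g'` vanishes to order `r` at `0` (`g'(z) = z^r·G(z)`, `G 0 ≠ 0`), and `dh = z^m·H̃(z) dz`
(`H̃ 0 ≠ 0`, `m < 0`), then the Hopf differential coefficient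
`q(z) = -(1/2)·(g'(z)/g(z))·z^m·H̃(z)` has order `m + r` at `0`, the Jorge–Meeks multiplicity
is `ν = -m - 1`, and `ν = r - (m + r) - 1`. -/
theorem hopf_order_case_n_zero
    (g G H' : ℂ → ℂ) (r : ℕ) (m : ℤ) (hm : m < 0)
    (hg : AnalyticAt ℂ g 0) (hg0 : g 0 ≠ 0)
    (hG : AnalyticAt ℂ G 0) (hG0 : G 0 ≠ 0)
    (hgd : ∀ᶠ z in 𝓝 (0 : ℂ), deriv g z = z ^ r * G z)
    (hH : AnalyticAt ℂ H' 0) (hH0 : H' 0 ≠ 0) :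
    (∃ K : ℂ → ℂ, AnalyticAt ℂ K 0 ∧ K 0 ≠ 0 ∧
        ∀ᶠ z in 𝓝[≠] (0 : ℂ),
          -(1 / 2) * (deriv g z / g z) * (z ^ m * H' z) = z ^ (m + (r : ℤ)) * K z) ∧
      (-m - 1 : ℤ) = (r : ℤ) - (m + (r : ℤ)) - 1 :=
  hopf_order_case_n_zero_general g G H' r m hg hg0 hG hG0 hgd hH hH0
end

section
/- Let g(z) = z·(1 - conj(p)²z²)(1 - conj(q)²z²) / ((z² - p²)(z² - q²)) and dh(z)dz with dh(z) = i·(1 - conj(p)²z²)(1 - conj(q)²z²)(z² - p²)(z² - q²) / (z(z² - 1)⁴), where p, q ∈ ℂ are nonzero with p²q² = iλ for some λ ∈ ℝ \ {0}, and p², q² ∉ {0, 1}. Then: (1) g'/g has a simple pole at 0 with residue 1; (2) dh has a simple pole at 0 with residue i·p²q² = -λ ∈ ℝ \ {0}; (3) consequently the quadratic differential Q = -(1/2)(g'/g)·dh·dz² has a pole of order two at 0 with lim_{z→0} z²·(coefficient of Q) = -i p² q²/2 = λ/2, a nonzero real number. -/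
open Filter Topology Complex

/-!
At a zero of order `n`, `f = zⁿ h` with `h(0) ≠ 0`, one has `z f'/f = n + z h'/h → n`; at a simple
pole `f = F/z`, `z f → F(0)`. Here `g = z N/D` with `N(0) = 1`, `D(0) = p²q² ≠ 0`, and
`z dh = i N D/(z² - 1)⁴ → i p²q²`; `z²` times the Hopf coefficient is `-½` times the product of
the two limits.
-/

theorem tendsto_mul_deriv_div_of_eq_pow_mul {𝕜 : Type*} [NontriviallyNormedField 𝕜]
    [CompleteSpace 𝕜] {f h : 𝕜 → 𝕜} (n : ℕ)
    (hf : ∀ z, f z = z ^ n * h z) (hh : AnalyticAt 𝕜 h 0) (h0 : h 0 ≠ 0) :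
    Tendsto (fun z => z * deriv f z / f z) (𝓝[≠] 0) (𝓝 n) := by
  obtain rfl : f = fun z => z ^ n * h z := funext hf
  have hlim : Tendsto (fun z => n + z * deriv h z / h z) (𝓝 0) (𝓝 (n + 0 * deriv h 0 / h 0)) :=
    tendsto_const_nhds.add ((continuousAt_id.mul hh.deriv.continuousAt).div hh.continuousAt h0)
  rw [zero_mul, zero_div, add_zero] at hlim
  refine (hlim.mono_left nhdsWithin_le_nhds).congr' ?_
  filter_upwards [nhdsWithin_le_nhds hh.eventually_analyticAt,
    nhdsWithin_le_nhds (hh.continuousAt.eventually_ne h0), self_mem_nhdsWithin]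
    with z hz_an hz_ne (hz : z ≠ 0)
  symm
  rw [((hasDerivAt_pow n z).fun_mul hz_an.differentiableAt.hasDerivAt).deriv]
  rcases n with _ | n
  · simp
  · field_simp
    push_cast
    ring

theorem tendsto_mul_of_eq_div_self {𝕜 : Type*} [NontriviallyNormedField 𝕜] {f F : 𝕜 → 𝕜}
    (hF : ContinuousAt F 0) (hf : ∀ z ≠ 0, f z = F z / z) :
    Tendsto (fun z => z * f z) (𝓝[≠] 0) (𝓝 (F 0)) :=
  (hF.tendsto.mono_left nhdsWithin_le_nhds).congr' <|
    eventually_nhdsWithin_of_forall fun z hz => by dsimp only; rw [hf z hz, mul_div_cancel₀ _ hz]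

theorem closed_curvature_line_at_catenoidal_end_general
    (p q : ℂ) (lam : ℝ) (hlam : lam ≠ 0)
    (hpq : p ^ 2 * q ^ 2 = I * lam)
    (g dh : ℂ → ℂ)
    (hg : ∀ z : ℂ, g z =
      z * (1 - (starRingEnd ℂ) p ^ 2 * z ^ 2) * (1 - (starRingEnd ℂ) q ^ 2 * z ^ 2) /
        ((z ^ 2 - p ^ 2) * (z ^ 2 - q ^ 2)))
    (hdh : ∀ z : ℂ, dh z =
      I * ((1 - (starRingEnd ℂ) p ^ 2 * z ^ 2) * (1 - (starRingEnd ℂ) q ^ 2 * z ^ 2) *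
          (z ^ 2 - p ^ 2) * (z ^ 2 - q ^ 2)) /
        (z * (z ^ 2 - 1) ^ 4)) :
    Tendsto (fun z : ℂ => z * deriv g z / g z) (𝓝[≠] (0 : ℂ)) (𝓝 1) ∧
      (Tendsto (fun z : ℂ => z * dh z) (𝓝[≠] (0 : ℂ)) (𝓝 (I * p ^ 2 * q ^ 2)) ∧
        I * p ^ 2 * q ^ 2 = (-lam : ℝ) ∧ (-lam : ℝ) ≠ 0) ∧
      (Tendsto (fun z : ℂ => z ^ 2 * (-(1 / 2) * (deriv g z / g z) * dh z))
          (𝓝[≠] (0 : ℂ)) (𝓝 (-(I * p ^ 2 * q ^ 2) / 2)) ∧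
        -(I * p ^ 2 * q ^ 2) / 2 = ((lam / 2 : ℝ) : ℂ) ∧ (lam / 2 : ℝ) ≠ 0) := by
  have hpq0 : p ^ 2 * q ^ 2 ≠ 0 := by
    rw [hpq]; exact mul_ne_zero I_ne_zero (ofReal_ne_zero.2 hlam)
  have hres : I * p ^ 2 * q ^ 2 = ((-lam : ℝ) : ℂ) := by
    rw [mul_assoc, hpq, ← mul_assoc, I_mul_I]; push_cast; ring
  let N : ℂ → ℂ := fun z =>
    (1 - (starRingEnd ℂ) p ^ 2 * z ^ 2) * (1 - (starRingEnd ℂ) q ^ 2 * z ^ 2)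
  let D : ℂ → ℂ := fun z => (z ^ 2 - p ^ 2) * (z ^ 2 - q ^ 2)
  have hD0 : D 0 ≠ 0 := by simpa [D] using hpq0
  have hlog : Tendsto (fun z => z * deriv g z / g z) (𝓝[≠] 0) (𝓝 1) := by
    simpa using tendsto_mul_deriv_div_of_eq_pow_mul (h := fun z => N z / D z) 1
      (fun z => by rw [hg z]; ring) ((by fun_prop : AnalyticAt ℂ N 0).div (by fun_prop) hD0)
      (div_ne_zero (by simp [N]) hD0)
  have hdh_res : Tendsto (fun z => z * dh z) (𝓝[≠] 0) (𝓝 (I * p ^ 2 * q ^ 2)) := by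
    convert tendsto_mul_of_eq_div_self (f := dh) (F := fun z => I * (N z * D z) / (z ^ 2 - 1) ^ 4)
      (by fun_prop (disch := norm_num)) (fun z _ => by rw [hdh z, div_div, mul_comm z]; ring)
      using 2
    simp [N, D]
    ring
  refine ⟨hlog, ⟨hdh_res, hres, by exact_mod_cast neg_ne_zero.2 hlam⟩, ?_, ?_,
    div_ne_zero hlam two_ne_zero⟩
  · convert (hlog.mul hdh_res).const_mul (-(1 / 2) : ℂ) using 1
    · funext z; ring
    · ring_nf
  · rw [hres]; push_cast; ring

/-- For the Weierstrass data
`g(z) = z(1 - conj p² z²)(1 - conj q² z²) / ((z² - p²)(z² - q²))` and the height differential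
coefficient
`dh(z) = i(1 - conj p² z²)(1 - conj q² z²)(z² - p²)(z² - q²) / (z(z² - 1)⁴)`,
with `p, q ≠ 0`, `p²q² = iλ`, `λ` real nonzero, `p², q² ∉ {0, 1}`:
(1) `g'/g` has a simple pole at `0` with residue `1`;
(2) `dh` has a simple pole at `0` with residue `i p² q² = -λ`, a nonzero real;
(3) the Hopf-differential coefficient `-(1/2)(g'/g)·dh` has a pole of order two at `0` with
quadratic limit `-i p² q²/2 = λ/2`, a nonzero real. -/
theorem closed_curvature_line_at_catenoidal_end
    (p q : ℂ) (lam : ℝ) (hlam : lam ≠ 0)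
    (hp : p ≠ 0) (hq : q ≠ 0) (hp1 : p ^ 2 ≠ 1) (hq1 : q ^ 2 ≠ 1)
    (hpq : p ^ 2 * q ^ 2 = I * lam)
    (g dh : ℂ → ℂ)
    (hg : ∀ z : ℂ, g z =
      z * (1 - (starRingEnd ℂ) p ^ 2 * z ^ 2) * (1 - (starRingEnd ℂ) q ^ 2 * z ^ 2) /
        ((z ^ 2 - p ^ 2) * (z ^ 2 - q ^ 2)))
    (hdh : ∀ z : ℂ, dh z =
      I * ((1 - (starRingEnd ℂ) p ^ 2 * z ^ 2) * (1 - (starRingEnd ℂ) q ^ 2 * z ^ 2) *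
          (z ^ 2 - p ^ 2) * (z ^ 2 - q ^ 2)) /
        (z * (z ^ 2 - 1) ^ 4)) :
    Tendsto (fun z : ℂ => z * deriv g z / g z) (𝓝[≠] (0 : ℂ)) (𝓝 1) ∧
      (Tendsto (fun z : ℂ => z * dh z) (𝓝[≠] (0 : ℂ)) (𝓝 (I * p ^ 2 * q ^ 2)) ∧
        I * p ^ 2 * q ^ 2 = (-lam : ℝ) ∧ (-lam : ℝ) ≠ 0) ∧
      (Tendsto (fun z : ℂ => z ^ 2 * (-(1 / 2) * (deriv g z / g z) * dh z))
          (𝓝[≠] (0 : ℂ)) (𝓝 (-(I * p ^ 2 * q ^ 2) / 2)) ∧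
        -(I * p ^ 2 * q ^ 2) / 2 = ((lam / 2 : ℝ) : ℂ) ∧ (lam / 2 : ℝ) ≠ 0) :=
  closed_curvature_line_at_catenoidal_end_general p q lam hlam hpq g dh hg hdh
end
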